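/- Let K ⊆ R^d be compact with ℋ^d(∂K) = 0, Λ a full-rank lattice with Voronoi cell V_0(Λ) ⊆ B(0,C), and r ∈ ℕ. Define φ_d^{r,0}(K ∩ aΛ) = (1/r!) Σ_{z ∈ K∩aΛ} ∫_{z + aV_0(Λ)} x^{⊗r} dx and Φ_d^{r,0}(K) = (1/r!) ∫_K x^{⊗r} dx (tensor-valued integrals). Then |φ_d^{r,0}(K ∩ aΛ) − Φ_d^{r,0}(K)| ≤ (1/r!) ∫_{(∂K)^{aC}} |x|^r dx, and hence φ_d^{r,0}(K ∩ aΛ) → Φ_d^{r,0}(K) as a → 0+. -/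

import Mathlib

open Metric Filter MeasureTheory
open scoped Pointwise BigOperators

/-- The tensor power `x^{⊗r}` of `x ∈ ℝ^d`, viewed as the continuous multilinear form
`(v₁, …, v_r) ↦ ∏ i, ⟪x, v i⟫`. -/
noncomputable def tpow {d : ℕ} (r : ℕ) (x : EuclideanSpace ℝ (Fin d)) :
    ContinuousMultilinearMap ℝ (fun _ : Fin r => EuclideanSpace ℝ (Fin d)) ℝ :=
  (ContinuousMultilinearMap.mkPiAlgebra ℝ (Fin r) ℝ).compContinuousLinearMap
    fun _ => innerSL ℝ x

/-- The digital volume-tensor estimator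
`φ_d^{r,0}(K ∩ aΛ) = (1/r!) ∑_{z ∈ K ∩ aΛ} ∫_{z + aV₀} x^{⊗r} dx`. -/
noncomputable def phiVol {d : ℕ} (r : ℕ) (Λ V₀ K : Set (EuclideanSpace ℝ (Fin d)))
    (a : ℝ) : ContinuousMultilinearMap ℝ (fun _ : Fin r => EuclideanSpace ℝ (Fin d)) ℝ :=
  ((r.factorial : ℝ))⁻¹ •
    ∑' z : ↥(K ∩ a • Λ), ∫ x in (fun y => (z : EuclideanSpace ℝ (Fin d)) + y) '' (a • V₀),
      tpow r x ∂volume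

/-- The volume tensor `Φ_d^{r,0}(K) = (1/r!) ∫_K x^{⊗r} dx`. -/
noncomputable def PhiVol {d : ℕ} (r : ℕ) (K : Set (EuclideanSpace ℝ (Fin d))) :
    ContinuousMultilinearMap ℝ (fun _ : Fin r => EuclideanSpace ℝ (Fin d)) ℝ :=
  ((r.factorial : ℝ))⁻¹ • ∫ x in K, tpow r x ∂volume

/-
The scaled Voronoi cells `z + aV₀` overlap only in null sets, so `φ(K ∩ aΛ)` is `1/r!` times the
integral of `x^{⊗r}` over the union `U_a` of the cells of the points `z ∈ K ∩ aΛ`, and the error is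
at most `1/r!` times the integral of `|x|^r` over `U_a ∆ K`. A point of `U_a ∆ K` lies at distance
at most `aC` from a point of `aΛ` on the other side of `∂K`, and the segment joining them meets
`∂K`; hence `U_a ∆ K` lies in the `aC`-neighbourhood of `∂K`. These neighbourhoods shrink to the
compact null set `∂K`, so their measure, and with it the error, tends to `0`.
-/

open Set Bornology
open scoped symmDiff Topology

theorem IsPreconnected.inter_frontier_nonempty {X : Type*} [TopologicalSpace X] {s t : Set X}
    (hs : IsPreconnected s) (hst : (s ∩ t).Nonempty) (hs_t : (s \ t).Nonempty) :
    (s ∩ frontier t).Nonempty := by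
  by_contra h
  have hcover : s ⊆ interior t ∪ (closure t)ᶜ := fun x hx => by
    by_cases hxt : x ∈ closure t
    · exact .inl (by_contra fun hxi => h ⟨x, hx, hxt, hxi⟩)
    · exact .inr hxt
  obtain ⟨x, hxs, hxt⟩ := hst
  obtain ⟨y, hys, hyt⟩ := hs_t
  obtain ⟨z, -, hzi, hzc⟩ := hs _ _ isOpen_interior isClosed_closure.isOpen_compl hcover
    ⟨x, hxs, (hcover hxs).resolve_right (not_not.2 (subset_closure hxt))⟩
    ⟨y, hys, (hcover hys).resolve_left fun hyi => hyt (interior_subset hyi)⟩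
  exact hzc (interior_subset_closure hzi)

theorem exists_mem_frontier_dist_le {E : Type*} [SeminormedAddCommGroup E] [NormedSpace ℝ E]
    {K : Set E} {x y : E} (hx : x ∈ K) (hy : y ∉ K) : ∃ p ∈ frontier K, dist x p ≤ dist x y := by
  obtain ⟨p, hp, hpK⟩ := (convex_segment x y).isPreconnected.inter_frontier_nonempty
    ⟨x, left_mem_segment ℝ x y, hx⟩ ⟨y, right_mem_segment ℝ x y, hy⟩
  exact ⟨p, hpK, by linarith [dist_add_dist_of_mem_segment hp, dist_nonneg (x := p) (y := y)]⟩

section Integral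

variable {X E : Type*} [MeasurableSpace X] {μ : Measure X} [NormedAddCommGroup E]
  [NormedSpace ℝ E]

theorem norm_setIntegral_sub_setIntegral_le {f : X → E} {g : X → ℝ} {s t : Set X}
    (hs : MeasurableSet s) (ht : MeasurableSet t) (hfs : IntegrableOn f s μ)
    (hft : IntegrableOn f t μ) (hgs : IntegrableOn g s μ) (hgt : IntegrableOn g t μ)
    (hfg : ∀ x, ‖f x‖ ≤ g x) :
    ‖∫ x in s, f x ∂μ - ∫ x in t, f x ∂μ‖ ≤ ∫ x in s ∆ t, g x ∂μ := by
  have hsplit : ∫ x in s, f x ∂μ - ∫ x in t, f x ∂μ =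
      ∫ x in s \ t, f x ∂μ - ∫ x in t \ s, f x ∂μ := by
    rw [← integral_inter_add_sdiff ht hfs, ← integral_inter_add_sdiff hs hft, inter_comm]
    abel
  have hbound {u : Set X} (hgu : IntegrableOn g u μ) : ‖∫ x in u, f x ∂μ‖ ≤ ∫ x in u, g x ∂μ :=
    norm_integral_le_of_norm_le hgu (.of_forall hfg)
  calc ‖∫ x in s, f x ∂μ - ∫ x in t, f x ∂μ‖
      ≤ ‖∫ x in s \ t, f x ∂μ‖ + ‖∫ x in t \ s, f x ∂μ‖ := hsplit ▸ norm_sub_le _ _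
    _ ≤ ∫ x in s \ t, g x ∂μ + ∫ x in t \ s, g x ∂μ :=
      add_le_add (hbound (hgs.mono_set sdiff_subset)) (hbound (hgt.mono_set sdiff_subset))
    _ = ∫ x in s ∆ t, g x ∂μ :=
      (setIntegral_union disjoint_sdiff_sdiff (ht.diff hs) (hgs.mono_set sdiff_subset)
        (hgt.mono_set sdiff_subset)).symm

theorem tendsto_setIntegral_of_subset_cthickening [MetricSpace X] [ProperSpace X]
    [OpensMeasurableSpace X] [IsFiniteMeasureOnCompacts μ] {F : Set X} (hF : IsCompact F)
    (hF₀ : μ F = 0) {g : X → E} (hg : Continuous g) {ι : Type*} {l : Filter ι} {δ : ι → ℝ}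
    (hδ : Tendsto δ l (𝓝 0)) {s : ι → Set X} (hs : ∀ᶠ i in l, s i ⊆ cthickening (δ i) F) :
    Tendsto (fun i => ∫ x in s i, g x ∂μ) l (𝓝 0) := by
  obtain ⟨M, hM⟩ := (hF.cthickening (r := 1)).exists_bound_of_continuousOn hg.continuousOn
  have hvol : Tendsto (fun i => μ.real (cthickening (δ i) F)) l (𝓝 0) := by
    have := (tendsto_measure_cthickening_of_isCompact (μ := μ) hF).comp hδ
    rw [hF₀] at this
    exact (ENNReal.tendsto_toReal ENNReal.zero_ne_top).comp this
  rw [tendsto_zero_iff_norm_tendsto_zero]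
  refine squeeze_zero' (.of_forall fun _ => norm_nonneg _) ?_
    (by simpa using hvol.const_mul (max M 0))
  filter_upwards [hs, hδ.eventually (gt_mem_nhds one_pos)] with i hsi hδi
  have hsub : s i ⊆ cthickening 1 F := hsi.trans (cthickening_mono hδi.le F)
  calc ‖∫ x in s i, g x ∂μ‖ ≤ max M 0 * μ.real (s i) :=
        norm_setIntegral_le_of_norm_le_const
          ((measure_mono hsub).trans_lt hF.cthickening.measure_lt_top)
          fun x hx => (hM x (hsub hx)).trans (le_max_left _ _)
    _ ≤ max M 0 * μ.real (cthickening (δ i) F) :=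
        mul_le_mul_of_nonneg_left (measureReal_mono hsi hF.cthickening.measure_lt_top.ne)
          (le_max_right _ _)

theorem setIntegral_le_setIntegral_infDist_le [MetricSpace X] [ProperSpace X]
    [OpensMeasurableSpace X] [IsFiniteMeasureOnCompacts μ] {F s : Set X} (hF : IsBounded F)
    {δ : ℝ} (hs : ∀ x ∈ s, ∃ p ∈ F, dist x p ≤ δ) {g : X → ℝ} (hg : Continuous g)
    (hg₀ : ∀ x, 0 ≤ g x) : ∫ x in s, g x ∂μ ≤ ∫ x in {x | infDist x F ≤ δ}, g x ∂μ := by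
  rcases F.eq_empty_or_nonempty with rfl | hFne
  · have : s = ∅ := eq_empty_of_forall_notMem fun x hx => by simpa using hs x hx
    simpa [this] using setIntegral_nonneg_of_ae (.of_forall fun x => hg₀ x)
  have hN : IsCompact {x | infDist x F ≤ δ} := by
    refine isCompact_of_isClosed_isBounded (isClosed_le (continuous_infDist_pt F) continuous_const)
      ((hF.thickening (δ := δ + 1)).subset fun x hx => ?_)
    exact (mem_thickening_iff_infDist_lt hFne).2 (lt_of_le_of_lt hx (lt_add_one δ))
  refine setIntegral_mono_set (hg.continuousOn.integrableOn_compact hN)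
    (.of_forall fun x => hg₀ x) (.of_forall fun x hx => ?_)
  obtain ⟨p, hpF, hxp⟩ := hs x hx
  exact (infDist_le_dist_of_mem hpF).trans hxp

end Integral

theorem continuous_tpow {d : ℕ} (r : ℕ) : Continuous (tpow (d := d) r) := by
  have : tpow (d := d) r = fun x => ContinuousMultilinearMap.compContinuousLinearMapLRight
      (ContinuousMultilinearMap.mkPiAlgebra ℝ (Fin r) ℝ) fun _ => innerSL ℝ x := rfl
  rw [this]
  exact (ContinuousMultilinearMap.compContinuousLinearMapLRight _).cont.comp
    (continuous_pi fun _ => (innerSL ℝ).continuous)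

theorem norm_tpow_le {d : ℕ} (r : ℕ) (x : EuclideanSpace ℝ (Fin d)) : ‖tpow r x‖ ≤ ‖x‖ ^ r :=
  calc ‖tpow r x‖ ≤ ‖ContinuousMultilinearMap.mkPiAlgebra ℝ (Fin r) ℝ‖ *
        ∏ _i : Fin r, ‖innerSL ℝ x‖ :=
      ContinuousMultilinearMap.norm_compContinuousLinearMap_le _ _
    _ = ‖x‖ ^ r := by simp [ContinuousMultilinearMap.norm_mkPiAlgebra, innerSL_apply_norm]

theorem isClosed_voronoiCell {E : Type*} [SeminormedAddCommGroup E] (Λ : Set E) :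
    IsClosed {x : E | ∀ z ∈ Λ, ‖x‖ ≤ ‖x - z‖} := by
  simp only [ofPred_forall]
  exact isClosed_biInter fun z _ =>
    isClosed_le continuous_norm (continuous_id.sub continuous_const).norm

section Digitization

variable {E : Type*} [NormedAddCommGroup E] [NormedSpace ℝ E] {Λ V₀ K : Set E} {a C : ℝ}

def cellUnion (Λ V₀ K : Set E) (a : ℝ) : Set E :=
  ⋃ z : ↥(K ∩ a • Λ), (fun y => (z : E) + y) '' (a • V₀)

theorem IsCompact.add_smul_set (hV₀ : IsCompact V₀) (z : E) (a : ℝ) :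
    IsCompact ((fun y => z + y) '' (a • V₀)) :=
  (hV₀.smul a).image (continuous_const.add continuous_id)

theorem isCompact_cellUnion (hV₀ : IsCompact V₀) (hfin : (K ∩ a • Λ).Finite) :
    IsCompact (cellUnion Λ V₀ K a) :=
  have := hfin.to_subtype
  isCompact_iUnion fun z => hV₀.add_smul_set z a

theorem dist_le_of_mem_add_smul_set (hV₀C : V₀ ⊆ closedBall 0 C) (ha : 0 ≤ a) {z y : E}
    (hy : y ∈ (fun v => z + v) '' (a • V₀)) : dist y z ≤ a * C := by
  obtain ⟨_, ⟨v, hv, rfl⟩, rfl⟩ := hy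
  rw [dist_eq_norm, add_sub_cancel_left, norm_smul, Real.norm_of_nonneg ha]
  exact mul_le_mul_of_nonneg_left (by simpa using hV₀C hv) ha

theorem exists_mem_add_smul_set (hcov : ∀ x, ∃ z ∈ Λ, x - z ∈ V₀) (ha : a ≠ 0) (x : E) :
    ∃ w ∈ Λ, x ∈ (fun v => a • w + v) '' (a • V₀) := by
  obtain ⟨w, hw, hxw⟩ := hcov (a⁻¹ • x)
  exact ⟨w, hw, a • (a⁻¹ • x - w), smul_mem_smul_set hxw,
    by simp only [smul_sub, smul_inv_smul₀ ha, add_sub_cancel]⟩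

theorem exists_mem_frontier_dist_le_of_mem_symmDiff_cellUnion (hV₀C : V₀ ⊆ closedBall 0 C)
    (hcov : ∀ x, ∃ z ∈ Λ, x - z ∈ V₀) (ha : 0 < a) {x : E} (hx : x ∈ cellUnion Λ V₀ K a ∆ K) :
    ∃ p ∈ frontier K, dist x p ≤ a * C := by
  rcases hx with ⟨hxU, hxK⟩ | ⟨hxK, hxU⟩
  · obtain ⟨z, hz⟩ := mem_iUnion.1 hxU
    obtain ⟨p, hpF, hp⟩ := exists_mem_frontier_dist_le (K := Kᶜ) hxK (not_not.2 z.2.1)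
    rw [frontier_compl] at hpF
    exact ⟨p, hpF, hp.trans (dist_le_of_mem_add_smul_set hV₀C ha.le hz)⟩
  · obtain ⟨w, hw, hxw⟩ := exists_mem_add_smul_set hcov ha.ne' x
    have hwK : a • w ∉ K := fun hwK =>
      hxU (mem_iUnion.2 ⟨⟨a • w, hwK, smul_mem_smul_set hw⟩, hxw⟩)
    obtain ⟨p, hpF, hp⟩ := exists_mem_frontier_dist_le hxK hwK
    exact ⟨p, hpF, hp.trans (dist_le_of_mem_add_smul_set hV₀C ha.le hxw)⟩

theorem image_smul_add_smul_set (a : ℝ) (w : E) (S : Set E) :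
    (fun v => a • w + v) '' (a • S) = a • ((fun v => w + v) '' S) := by
  simp only [← image_smul, image_image, smul_add]

variable [MeasurableSpace E] [BorelSpace E] [FiniteDimensional ℝ E] (μ : Measure E)
  [μ.IsAddHaarMeasure]

theorem pairwise_aedisjoint_add_smul_set
    (hnull : ∀ z ∈ Λ, ∀ z' ∈ Λ, z ≠ z' →
      μ (((fun y => z + y) '' V₀) ∩ ((fun y => z' + y) '' V₀)) = 0) (ha : a ≠ 0) :
    Pairwise (Function.onFun (AEDisjoint μ)
      fun z : ↥(K ∩ a • Λ) => (fun y => (z : E) + y) '' (a • V₀)) := by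
  intro z z' hzz'
  obtain ⟨w, hw, hwz : a • w = z⟩ := z.2.2
  obtain ⟨w', hw', hwz' : a • w' = z'⟩ := z'.2.2
  have hww' : w ≠ w' := by rintro rfl; exact hzz' (Subtype.ext (hwz.symm.trans hwz'))
  change μ ((fun y => (z : E) + y) '' (a • V₀) ∩ (fun y => (z' : E) + y) '' (a • V₀)) = 0
  rw [← hwz, ← hwz', image_smul_add_smul_set, image_smul_add_smul_set, ← smul_set_inter₀ ha,
    Measure.addHaar_smul, hnull w hw w' hw' hww', mul_zero]

theorem integral_cellUnion {G : Type*} [NormedAddCommGroup G] [NormedSpace ℝ G] {f : E → G}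
    (hV₀ : IsCompact V₀)
    (hnull : ∀ z ∈ Λ, ∀ z' ∈ Λ, z ≠ z' →
      μ (((fun y => z + y) '' V₀) ∩ ((fun y => z' + y) '' V₀)) = 0)
    (hfin : (K ∩ a • Λ).Finite) (ha : a ≠ 0) (hf : IntegrableOn f (cellUnion Λ V₀ K a) μ) :
    ∫ x in cellUnion Λ V₀ K a, f x ∂μ =
      ∑' z : ↥(K ∩ a • Λ), ∫ x in (fun y => (z : E) + y) '' (a • V₀), f x ∂μ :=
  have := hfin.to_subtype
  integral_iUnion_ae
    (fun z => (hV₀.add_smul_set z a).isClosed.measurableSet.nullMeasurableSet)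
    (pairwise_aedisjoint_add_smul_set μ hnull ha) hf

end Digitization

section VolumeTensor

variable {d : ℕ} (r : ℕ) {Λ V₀ K : Set (EuclideanSpace ℝ (Fin d))} {a : ℝ}

theorem phiVol_eq_smul_integral_cellUnion (hV₀ : IsCompact V₀)
    (hnull : ∀ z ∈ Λ, ∀ z' ∈ Λ, z ≠ z' →
      volume (((fun y => z + y) '' V₀) ∩ ((fun y => z' + y) '' V₀)) = 0)
    (hfin : (K ∩ a • Λ).Finite) (ha : a ≠ 0) :
    phiVol r Λ V₀ K a = ((r.factorial : ℝ))⁻¹ • ∫ x in cellUnion Λ V₀ K a, tpow r x := by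
  rw [phiVol, integral_cellUnion volume hV₀ hnull hfin ha
    ((continuous_tpow r).continuousOn.integrableOn_compact (isCompact_cellUnion hV₀ hfin))]

theorem norm_phiVol_sub_PhiVol_le (hV₀ : IsCompact V₀)
    (hnull : ∀ z ∈ Λ, ∀ z' ∈ Λ, z ≠ z' →
      volume (((fun y => z + y) '' V₀) ∩ ((fun y => z' + y) '' V₀)) = 0)
    (hK : IsCompact K) (hfin : (K ∩ a • Λ).Finite) (ha : a ≠ 0) :
    ‖phiVol r Λ V₀ K a - PhiVol r K‖ ≤
      ((r.factorial : ℝ))⁻¹ * ∫ x in cellUnion Λ V₀ K a ∆ K, ‖x‖ ^ r := by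
  have hU := isCompact_cellUnion hV₀ hfin
  have hpow : Continuous fun x : EuclideanSpace ℝ (Fin d) => ‖x‖ ^ r := by fun_prop
  rw [phiVol_eq_smul_integral_cellUnion r hV₀ hnull hfin ha, PhiVol,
    ← smul_sub ((r.factorial : ℝ))⁻¹ (∫ x in cellUnion Λ V₀ K a, tpow r x), norm_smul,
    Real.norm_of_nonneg (by positivity)]
  gcongr
  exact norm_setIntegral_sub_setIntegral_le hU.isClosed.measurableSet hK.isClosed.measurableSet
    ((continuous_tpow r).continuousOn.integrableOn_compact hU)
    ((continuous_tpow r).continuousOn.integrableOn_compact hK)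
    (hpow.continuousOn.integrableOn_compact hU) (hpow.continuousOn.integrableOn_compact hK)
    (norm_tpow_le r)

end VolumeTensor

theorem phiVol_tendsto_general {d : ℕ} (r : ℕ) (Λ V₀ : Set (EuclideanSpace ℝ (Fin d))) (C : ℝ)
    (hV₀def : V₀ = {x | ∀ z ∈ Λ, ‖x‖ ≤ ‖x - z‖})
    (hV₀C : V₀ ⊆ closedBall 0 C)
    (hcov : ∀ x : EuclideanSpace ℝ (Fin d), ∃ z ∈ Λ, x - z ∈ V₀)
    (hnull : ∀ z ∈ Λ, ∀ z' ∈ Λ, z ≠ z' →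
      volume (((fun y => z + y) '' V₀) ∩ ((fun y => z' + y) '' V₀)) = 0)
    (K : Set (EuclideanSpace ℝ (Fin d))) (hK : IsCompact K)
    (hbd : volume (frontier K) = 0)
    (hfin : ∀ a : ℝ, 0 < a → (K ∩ a • Λ).Finite) :
    (∀ a : ℝ, 0 < a →
      ‖phiVol r Λ V₀ K a - PhiVol r K‖ ≤
        ((r.factorial : ℝ))⁻¹ *
          ∫ x in {x | infDist x (frontier K) ≤ a * C}, ‖x‖ ^ r ∂volume) ∧
    Tendsto (fun a : ℝ => phiVol r Λ V₀ K a) (nhdsWithin 0 (Set.Ioi 0))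
      (nhds (PhiVol r K)) := by
  have hV₀ : IsCompact V₀ :=
    (isCompact_closedBall 0 C).of_isClosed_subset (hV₀def ▸ isClosed_voronoiCell Λ) hV₀C
  have hF : IsCompact (frontier K) :=
    hK.of_isClosed_subset isClosed_frontier hK.isClosed.frontier_subset
  have hest a (ha : 0 < a) := norm_phiVol_sub_PhiVol_le r hV₀ hnull hK (hfin a ha) ha.ne'
  have hnear a (ha : 0 < a) x (hx : x ∈ cellUnion Λ V₀ K a ∆ K) :=
    exists_mem_frontier_dist_le_of_mem_symmDiff_cellUnion hV₀C hcov ha hx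
  have hpow : Continuous fun x : EuclideanSpace ℝ (Fin d) => ‖x‖ ^ r := by fun_prop
  refine ⟨fun a ha => (hest a ha).trans (mul_le_mul_of_nonneg_left
    (setIntegral_le_setIntegral_infDist_le hF.isBounded (hnear a ha) hpow fun x => by positivity)
    (by positivity)), ?_⟩
  have hsmall : Tendsto (fun a => ∫ x in cellUnion Λ V₀ K a ∆ K, ‖x‖ ^ r) (𝓝[>] 0) (𝓝 0) := by
    refine tendsto_setIntegral_of_subset_cthickening hF hbd hpow
      (δ := fun a => a * C) ?_ (eventually_mem_nhdsWithin.mono fun a ha x hx => ?_)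
    · exact tendsto_nhdsWithin_of_tendsto_nhds ((continuous_mul_const C).tendsto' 0 0 (zero_mul C))
    · obtain ⟨p, hpF, hxp⟩ := hnear a ha x hx
      exact mem_cthickening_of_dist_le x p _ _ hpF hxp
  rw [tendsto_iff_norm_sub_tendsto_zero]
  exact squeeze_zero' (.of_forall fun _ => norm_nonneg _) (eventually_mem_nhdsWithin.mono hest)
    (by simpa using hsmall.const_mul ((r.factorial : ℝ))⁻¹)

/-- If `K ⊆ ℝ^d` is compact with `ℋ^d(∂K) = 0`, and `Λ` is a lattice whose Voronoi cell
`V₀ ⊆ B(0,C)` tiles `ℝ^d` (cover with pairwise null overlaps), then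
`|φ_d^{r,0}(K ∩ aΛ) − Φ_d^{r,0}(K)| ≤ (1/r!) ∫_{(∂K)^{aC}} |x|^r dx` for all `a > 0`, and
consequently `φ_d^{r,0}(K ∩ aΛ) → Φ_d^{r,0}(K)` as `a → 0⁺`. -/
theorem phiVol_tendsto {d : ℕ} (r : ℕ) (Λ V₀ : Set (EuclideanSpace ℝ (Fin d))) (C : ℝ)
    (hC : 0 < C) (hV₀def : V₀ = {x | ∀ z ∈ Λ, ‖x‖ ≤ ‖x - z‖})
    (hV₀C : V₀ ⊆ closedBall 0 C)
    (hcov : ∀ x : EuclideanSpace ℝ (Fin d), ∃ z ∈ Λ, x - z ∈ V₀)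
    (hnull : ∀ z ∈ Λ, ∀ z' ∈ Λ, z ≠ z' →
      volume (((fun y => z + y) '' V₀) ∩ ((fun y => z' + y) '' V₀)) = 0)
    (K : Set (EuclideanSpace ℝ (Fin d))) (hK : IsCompact K) (hne : K.Nonempty)
    (hbd : volume (frontier K) = 0)
    (hfin : ∀ a : ℝ, 0 < a → (K ∩ a • Λ).Finite) :
    (∀ a : ℝ, 0 < a →
      ‖phiVol r Λ V₀ K a - PhiVol r K‖ ≤
        ((r.factorial : ℝ))⁻¹ *
          ∫ x in {x | infDist x (frontier K) ≤ a * C}, ‖x‖ ^ r ∂volume) ∧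
    Tendsto (fun a : ℝ => phiVol r Λ V₀ K a) (nhdsWithin 0 (Set.Ioi 0))
      (nhds (PhiVol r K)) :=
  phiVol_tendsto_general r Λ V₀ C hV₀def hV₀C hcov hnull K hK hbd hfin
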